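/- Let α₀ ≤ α₁ in (0,1), κ ≥ 2, and let β be a shape function of the form β(r) = ∫₀^r u dν(u) for a probability measure ν on (0,∞). Suppose the p-values have unspecified dependence, with true null p-values stochastically lower bounded by uniform. Let R₀ be the step-up procedure with threshold Δ₀(i) = α₀β(i)/m (which has FDR ≤ π₀α₀), and let R be the adaptive step-up procedure with threshold Δ₁(i) = α₁·β(i)·F_κ(|R₀|/m)/m, where F_κ(x) = 1 for x ≤ 1/κ and F_κ(x) = (2/κ)/(1−√(1−4(1−x)/κ)) otherwise. Then FDR(R) ≤ α₁ + κ·α₀. -/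

import Mathlib

open MeasureTheory ENNReal

/-- `sortedVal x i`: the `i`-th smallest value of `x` (`1 ≤ i ≤ m`), `sortedVal x 0 = 0`. -/
noncomputable def sortedVal {m : ℕ} (x : Fin m → ℝ) (i : ℕ) : ℝ :=
  if i = 0 then 0
  else (Multiset.sort (Finset.univ.val.map x) (· ≤ ·)).getD (i - 1) 0

/-- `stepUpIndex Δ x = max{0 ≤ i ≤ m : p_(i) ≤ Δ(i)}`. -/
noncomputable def stepUpIndex {m : ℕ} (Δ : ℕ → ℝ) (x : Fin m → ℝ) : ℕ :=
  ((Finset.range (m + 1)).filter (fun i => sortedVal x i ≤ Δ i)).sup id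

/-- The step-up procedure with threshold collection `Δ`. -/
noncomputable def stepUp {m : ℕ} (Δ : ℕ → ℝ) (x : Fin m → ℝ) : Finset (Fin m) :=
  Finset.univ.filter (fun h => x h ≤ sortedVal x (stepUpIndex Δ x))

/-- The function `F_κ` of the two-stage distribution-free adaptive procedure. -/
noncomputable def Fk (κ x : ℝ) : ℝ :=
  if x ≤ 1 / κ then 1 else (2 / κ) / (1 - Real.sqrt (1 - 4 * (1 - x) / κ))

section sv
variable {m : ℕ} (x : Fin m → ℝ)

lemma length_sorted : (Multiset.sort (Finset.univ.val.map x) (· ≤ ·)).length = m := by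
  simp [Multiset.length_sort]

lemma sorted_sorted : (Multiset.sort (Finset.univ.val.map x) (· ≤ ·)).Pairwise (· ≤ ·) :=
  Multiset.pairwise_sort _ _

lemma sortedVal_mono {i j : ℕ} (hi : 1 ≤ i) (hij : i ≤ j) (hj : j ≤ m) :
    sortedVal x i ≤ sortedVal x j := by
  have hj1 : 1 ≤ j := le_trans hi hij
  unfold sortedVal
  rw [if_neg (by omega), if_neg (by omega)]
  set l := Multiset.sort (Finset.univ.val.map x) (· ≤ ·) with hl
  have hlen : l.length = m := length_sorted x
  rw [List.getD_eq_getElem l 0 (by omega), List.getD_eq_getElem l 0 (by omega)]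
  rcases eq_or_lt_of_le hij with h | h
  · subst h; exact le_refl _
  · exact List.Pairwise.rel_get_of_lt (sorted_sorted x) (by simp only [Fin.mk_lt_mk]; omega)

end sv

section sv2
variable {m : ℕ} (x : Fin m → ℝ)

lemma card_filter_sortedVal {i : ℕ} (hi1 : 1 ≤ i) (hi : i ≤ m) :
    i ≤ (Finset.univ.filter fun h => x h ≤ sortedVal x i).card := by
  classical
  set l := Multiset.sort (Finset.univ.val.map x) (· ≤ ·) with hl
  have hlen : l.length = m := length_sorted x
  have hv : sortedVal x i = l[i-1]'(by omega) := by
    unfold sortedVal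
    rw [if_neg (by omega), ← hl, List.getD_eq_getElem l 0 (by omega)]
  have hcard : (Finset.univ.filter fun h => x h ≤ sortedVal x i).card
      = Multiset.countP (fun a => a ≤ sortedVal x i) (Finset.univ.val.map x) := by
    rw [Multiset.countP_map]
    rfl
  have hperm : (Finset.univ.val.map x) = ↑l := (Multiset.sort_eq _ _).symm
  rw [hcard, hperm, Multiset.coe_countP]
  have : l = l.take i ++ l.drop i := (List.take_append_drop i l).symm
  rw [this, List.countP_append]
  have htake : (l.take i).countP (fun b => decide (b ≤ sortedVal x i)) = (l.take i).length := by
    apply List.countP_eq_length.mpr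
    intro a ha
    obtain ⟨j, hj, hja⟩ := List.mem_iff_getElem.mp ha
    have hjlt : j < min i l.length := by simpa using hj
    rw [List.getElem_take] at hja
    have : a ≤ l[i-1]'(by omega) := by
      rw [← hja]
      rcases eq_or_lt_of_le (show j ≤ i - 1 by omega) with h | h
      · subst h; exact le_refl _
      · exact List.Pairwise.rel_get_of_lt (sorted_sorted x) (by simp only [Fin.mk_lt_mk]; omega)
    simpa [hv] using this
  rw [htake]
  have : (l.take i).length = i := by simp [hlen]; omega
  omega

end sv2

section su
variable {m : ℕ} (Δ Δ' : ℕ → ℝ) (x : Fin m → ℝ)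

lemma sortedVal_zero : sortedVal x 0 = 0 := by simp [sortedVal]

lemma stepUpIndex_le : stepUpIndex Δ x ≤ m := by
  apply Finset.sup_le
  intro i hi
  simp only [Finset.mem_filter, Finset.mem_range] at hi
  simpa [id] using Nat.lt_succ_iff.mp hi.1

lemma stepUpIndex_mem (hΔ0 : 0 ≤ Δ 0) :
    stepUpIndex Δ x ∈ (Finset.range (m + 1)).filter (fun i => sortedVal x i ≤ Δ i) := by
  classical
  set s := (Finset.range (m + 1)).filter (fun i => sortedVal x i ≤ Δ i) with hs
  have hne : s.Nonempty := ⟨0, by simp [hs, sortedVal_zero, hΔ0]⟩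
  obtain ⟨a, ha, hmax⟩ := s.exists_max_image id hne
  have : s.sup id = a := le_antisymm (Finset.sup_le fun b hb => hmax b hb) (Finset.le_sup (f := id) ha)
  rw [stepUpIndex, ← hs, this]; exact ha

lemma sortedVal_stepUpIndex_le (hΔ0 : 0 ≤ Δ 0) :
    sortedVal x (stepUpIndex Δ x) ≤ Δ (stepUpIndex Δ x) := by
  have := stepUpIndex_mem Δ x hΔ0
  simp only [Finset.mem_filter] at this
  exact this.2

lemma stepUpIndex_le_card : stepUpIndex Δ x ≤ (stepUp Δ x).card := by
  rcases Nat.eq_zero_or_pos (stepUpIndex Δ x) with h | h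
  · omega
  · exact card_filter_sortedVal x h (stepUpIndex_le Δ x)

lemma card_stepUp_le : (stepUp Δ x).card ≤ m := by
  simpa using Finset.card_le_univ (stepUp Δ x)

lemma mem_stepUp_iff (h : Fin m) :
    h ∈ stepUp Δ x ↔ x h ≤ sortedVal x (stepUpIndex Δ x) := by simp [stepUp]

lemma self_consistent (hΔ0 : 0 ≤ Δ 0) (hmono : Monotone Δ) {h : Fin m}
    (hh : h ∈ stepUp Δ x) : x h ≤ Δ (stepUp Δ x).card := by
  calc x h ≤ sortedVal x (stepUpIndex Δ x) := (mem_stepUp_iff Δ x h).mp hh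
  _ ≤ Δ (stepUpIndex Δ x) := sortedVal_stepUpIndex_le Δ x hΔ0
  _ ≤ Δ (stepUp Δ x).card := hmono (stepUpIndex_le_card Δ x)

lemma stepUp_mono (hΔ0 : 0 ≤ Δ 0) (hΔ0' : 0 ≤ Δ' 0) (hΔ1 : 0 ≤ Δ 1)
    (hle : ∀ i, i ≤ m → Δ i ≤ Δ' i) : stepUp Δ x ⊆ stepUp Δ' x := by
  classical
  have hII : stepUpIndex Δ x ≤ stepUpIndex Δ' x := by
    apply Finset.sup_mono
    intro i hi
    simp only [Finset.mem_filter, Finset.mem_range] at hi ⊢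
    exact ⟨hi.1, le_trans hi.2 (hle i (Nat.lt_succ_iff.mp hi.1))⟩
  have key : sortedVal x (stepUpIndex Δ x) ≤ sortedVal x (stepUpIndex Δ' x) := by
    rcases Nat.eq_zero_or_pos (stepUpIndex Δ x) with h0 | h0
    · rw [h0, sortedVal_zero]
      rcases Nat.eq_zero_or_pos (stepUpIndex Δ' x) with h0' | h0'
      · rw [h0', sortedVal_zero]
      · by_contra hneg
        push_neg at hneg
        have h1 : sortedVal x 1 ≤ Δ 1 := by
          have : sortedVal x 1 ≤ sortedVal x (stepUpIndex Δ' x) :=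
            sortedVal_mono x le_rfl h0' (stepUpIndex_le Δ' x)
          linarith
        have hm1 : (1 : ℕ) ∈ (Finset.range (m + 1)).filter (fun i => sortedVal x i ≤ Δ i) := by
          have hm' : 1 ≤ m := by
            have := stepUpIndex_le Δ' x; omega
          simp only [Finset.mem_filter, Finset.mem_range]
          exact ⟨by omega, h1⟩
        have : 1 ≤ stepUpIndex Δ x := Finset.le_sup (f := id) hm1
        omega
    · exact sortedVal_mono x h0 hII (stepUpIndex_le Δ' x)
  intro h hh
  rw [mem_stepUp_iff] at hh ⊢
  linarith

end su

noncomputable def W (m k : ℕ) : ℝ := (1/(k:ℝ) - 1/((k:ℝ)+1)) + if k = m then 1/((m:ℝ)+1) else 0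

lemma W_nonneg {m k : ℕ} (hk : 1 ≤ k) : 0 ≤ W m k := by
  have h1 : (0:ℝ) < k := by exact_mod_cast hk
  have h2 : (0:ℝ) < (k:ℝ)+1 := by linarith
  have : (1:ℝ)/(k+1) ≤ 1/k := by
    apply one_div_le_one_div_of_le h1; linarith
  have : (0:ℝ) ≤ (1/k - 1/(k+1) : ℝ) := by linarith
  unfold W
  split <;> [skip; linarith]
  have : (0:ℝ) ≤ 1/((m:ℝ)+1) := by positivity
  linarith

lemma tele : ∀ n r : ℕ, 1 ≤ r → r ≤ n →
    ∑ k ∈ Finset.Icc r n, ((1:ℝ)/k - 1/(k+1)) = 1/r - 1/(n+1) := by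
  intro n
  induction n with
  | zero => intro r h1 h2; omega
  | succ n ih =>
    intro r h1 h2
    rcases Nat.lt_or_ge n r with h | h
    · have : r = n + 1 := by omega
      subst this
      simp [Finset.Icc_self]
    · rw [Finset.sum_Icc_succ_top (by omega), ih r h1 h]
      push_cast
      ring

lemma W_sum {m r : ℕ} (h1 : 1 ≤ r) (h2 : r ≤ m) :
    ∑ k ∈ Finset.Icc r m, W m k = 1/r := by
  unfold W
  rw [Finset.sum_add_distrib, tele m r h1 h2, Finset.sum_ite_eq' (Finset.Icc r m) m]
  rw [if_pos (by simp [Finset.mem_Icc]; omega)]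
  ring

lemma abel (m : ℕ) (g : ℕ → ℝ) (hg0 : g 0 = 0) :
    ∑ k ∈ Finset.Icc 1 m, W m k * g k = ∑ k ∈ Finset.Icc 1 m, (g k - g (k-1))/k := by
  induction m with
  | zero => simp
  | succ n ih =>
    rw [Finset.sum_Icc_succ_top (by omega), Finset.sum_Icc_succ_top (by omega)]
    have hsplit : ∑ k ∈ Finset.Icc 1 n, W (n+1) k * g k
        = (∑ k ∈ Finset.Icc 1 n, W n k * g k) - g n / (n+1) := by
      have : ∀ k ∈ Finset.Icc 1 n, W (n+1) k * g k
          = W n k * g k - (if k = n then (1/((n:ℝ)+1)) * g k else 0) := by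
        intro k hk
        simp only [Finset.mem_Icc] at hk
        unfold W
        rw [if_neg (by omega)]
        split <;> push_cast <;> ring
      rw [Finset.sum_congr rfl this, Finset.sum_sub_distrib]
      congr 1
      rw [Finset.sum_ite_eq' (Finset.Icc 1 n) n]
      rcases Nat.eq_zero_or_pos n with h0 | h0
      · subst h0; simp [hg0]
      · rw [if_pos (by simp [Finset.mem_Icc]; omega)]; ring
    rw [hsplit, ih]
    have hW : W (n+1) (n+1) = 1/((n:ℝ)+1) := by
      unfold W; rw [if_pos rfl]; push_cast; field_simp; ring
    rw [hW]
    have : (↑(n + 1):ℝ) = (n:ℝ)+1 := by push_cast; ring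
    simp only [Nat.add_sub_cancel, this]
    ring

section beta
variable (ν : Measure ℝ) [IsProbabilityMeasure ν]
  (β : ℕ → ℝ) (hβ : ∀ r : ℕ, β r = ∫ u in Set.Ioc (0 : ℝ) (r : ℝ), u ∂ν)

lemma integ (a b : ℝ) : IntegrableOn (fun u => u) (Set.Ioc a b) ν := by
  apply Measure.integrableOn_of_bounded (M := max |a| |b|)
  · exact (measure_lt_top _ _).ne
  · exact aestronglyMeasurable_id
  · filter_upwards [ae_restrict_mem measurableSet_Ioc] with u hu
    rw [Real.norm_eq_abs, abs_le]
    constructor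
    · calc -(max |a| |b|) ≤ -|a| := by simp
        _ ≤ a := neg_abs_le a
        _ ≤ u := le_of_lt hu.1
    · exact le_trans hu.2 (le_trans (le_abs_self b) (le_max_right _ _))

lemma meas_sum : ∀ n : ℕ,
    ∑ k ∈ Finset.Icc 1 n, (ν (Set.Ioc ((k:ℝ)-1) (k:ℝ))).toReal
      = (ν (Set.Ioc (0:ℝ) (n:ℝ))).toReal := by
  intro n
  induction n with
  | zero => simp
  | succ n ih =>
    rw [Finset.sum_Icc_succ_top (by omega), ih]
    have hdis : Disjoint (Set.Ioc (0:ℝ) (n:ℝ)) (Set.Ioc (n:ℝ) ((n:ℝ)+1)) :=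
      Set.Ioc_disjoint_Ioc.mpr (by simp)
    have hun : Set.Ioc (0:ℝ) (n:ℝ) ∪ Set.Ioc (n:ℝ) ((n:ℝ)+1) = Set.Ioc (0:ℝ) ((n:ℝ)+1) :=
      Set.Ioc_union_Ioc_eq_Ioc (by positivity) (by linarith)
    have hadd := measure_union hdis measurableSet_Ioc (μ := ν)
    rw [hun] at hadd
    have hfin1 : ν (Set.Ioc (0:ℝ) (n:ℝ)) ≠ ⊤ := (measure_lt_top _ _).ne
    have hfin2 : ν (Set.Ioc (n:ℝ) ((n:ℝ)+1)) ≠ ⊤ := (measure_lt_top _ _).ne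
    have hc : ((n+1:ℕ):ℝ) - 1 = (n:ℝ) := by push_cast; ring
    have hc2 : ((n+1:ℕ):ℝ) = (n:ℝ)+1 := by push_cast; ring
    rw [hc, hc2, hadd, ENNReal.toReal_add hfin1 hfin2]

include hβ

lemma beta_zero : β 0 = 0 := by rw [hβ]; simp

lemma beta_nonneg (r : ℕ) : 0 ≤ β r := by
  rw [hβ]
  exact setIntegral_nonneg measurableSet_Ioc (fun u hu => le_of_lt hu.1)

lemma beta_split (k : ℕ) :
    β (k+1) = β k + ∫ u in Set.Ioc (k:ℝ) ((k:ℝ)+1), u ∂ν := by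
  rw [hβ, hβ]
  have hd : Disjoint (Set.Ioc (0:ℝ) (k:ℝ)) (Set.Ioc (k:ℝ) ((k:ℝ)+1)) :=
    Set.Ioc_disjoint_Ioc.mpr (by simp)
  have hu : Set.Ioc (0:ℝ) (k:ℝ) ∪ Set.Ioc (k:ℝ) ((k:ℝ)+1) = Set.Ioc (0:ℝ) ((k:ℝ)+1) :=
    Set.Ioc_union_Ioc_eq_Ioc (by positivity) (by linarith)
  have hspl := setIntegral_union hd measurableSet_Ioc (integ ν 0 (k:ℝ))
    (integ ν (k:ℝ) ((k:ℝ)+1)) (f := fun u => u) (μ := ν)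
  rw [hu] at hspl
  have hc : ((k+1:ℕ):ℝ) = (k:ℝ)+1 := by push_cast; ring
  rw [hc, hspl]

lemma beta_mono {i j : ℕ} (hij : i ≤ j) : β i ≤ β j := by
  induction j with
  | zero => have : i = 0 := by omega
            subst this; exact le_refl _
  | succ n ih =>
    rcases Nat.lt_or_ge i (n+1) with h | h
    · have h1 := ih (by omega)
      have h2 := beta_split ν β hβ n
      have h3 : 0 ≤ ∫ u in Set.Ioc (n:ℝ) ((n:ℝ)+1), u ∂ν :=
        setIntegral_nonneg measurableSet_Ioc (fun u hu => by
          have : (0:ℝ) ≤ (n:ℝ) := by positivity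
          linarith [hu.1])
      linarith
    · have : i = n+1 := by omega
      subst this; exact le_refl _

lemma beta_diff_le (k : ℕ) :
    β (k+1) - β k ≤ ((k:ℝ)+1) * (ν (Set.Ioc (k:ℝ) ((k:ℝ)+1))).toReal := by
  rw [beta_split ν β hβ k]
  have h1 : ∫ u in Set.Ioc (k:ℝ) ((k:ℝ)+1), u ∂ν
      ≤ ∫ _ in Set.Ioc (k:ℝ) ((k:ℝ)+1), ((k:ℝ)+1) ∂ν := by
    apply setIntegral_mono_on (integ ν _ _)
      (integrableOn_const (measure_lt_top _ _).ne) measurableSet_Ioc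
    exact fun u hu => hu.2
  rw [setIntegral_const, smul_eq_mul] at h1
  change _ ≤ (ν _).toReal * _ at h1
  linarith

lemma S_le_one (m : ℕ) : ∑ k ∈ Finset.Icc 1 m, W m k * β k ≤ 1 := by
  rw [abel m β (beta_zero ν β hβ)]
  have h1 : ∀ k ∈ Finset.Icc 1 m, (β k - β (k-1))/(k:ℝ)
      ≤ (ν (Set.Ioc ((k:ℝ)-1) (k:ℝ))).toReal := by
    intro k hk
    simp only [Finset.mem_Icc] at hk
    obtain ⟨j, rfl⟩ : ∃ j, k = j + 1 := ⟨k - 1, by omega⟩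
    have h2 := beta_diff_le ν β hβ j
    have hcast1 : ((j+1:ℕ):ℝ) = (j:ℝ)+1 := by push_cast; ring
    have hcast : β (j+1) - β (j+1-1) = β (j+1) - β j := by norm_num
    rw [hcast, hcast1, div_le_iff₀ (by positivity)]
    have hc3 : ((j:ℝ)+1-1) = (j:ℝ) := by ring
    rw [hc3]
    calc β (j+1) - β j ≤ ((j:ℝ)+1) * (ν (Set.Ioc (j:ℝ) ((j:ℝ)+1))).toReal := h2
      _ = (ν (Set.Ioc (j:ℝ) ((j:ℝ)+1))).toReal * ((j:ℝ)+1) := by ring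
  calc ∑ k ∈ Finset.Icc 1 m, (β k - β (k-1))/(k:ℝ)
      ≤ ∑ k ∈ Finset.Icc 1 m, (ν (Set.Ioc ((k:ℝ)-1) (k:ℝ))).toReal := Finset.sum_le_sum h1
    _ = (ν (Set.Ioc (0:ℝ) (m:ℝ))).toReal := meas_sum ν m
    _ ≤ 1 := by
        have hle := measure_mono (Set.subset_univ (Set.Ioc (0:ℝ) (m:ℝ))) (μ := ν)
        rw [measure_univ] at hle
        calc (ν (Set.Ioc (0:ℝ) (m:ℝ))).toReal ≤ (1:ℝ≥0∞).toReal :=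
              ENNReal.toReal_mono (by simp) hle
          _ = 1 := by simp

end beta

lemma Fk_nonneg {κ x : ℝ} (hκ : 2 ≤ κ) (hx1 : x ≤ 1) : 0 ≤ Fk κ x := by
  unfold Fk
  split
  · norm_num
  · have hκ0 : (0:ℝ) < κ := by linarith
    apply div_nonneg (div_nonneg (by norm_num) (by linarith))
    have harg : 1 - 4 * (1 - x) / κ ≤ 1 := by
      have : 0 ≤ 4 * (1 - x) / κ := div_nonneg (by linarith) (by linarith)
      linarith
    have : Real.sqrt (1 - 4 * (1 - x) / κ) ≤ 1 := by
      calc Real.sqrt (1 - 4 * (1 - x) / κ) ≤ Real.sqrt 1 := Real.sqrt_le_sqrt harg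
        _ = 1 := Real.sqrt_one
    linarith

lemma Fk_gt {κ π₀ x : ℝ} (hκ : 2 ≤ κ) (hπ : 0 < π₀) (hπ1 : π₀ ≤ 1) (hx1 : x ≤ 1)
    (hF : 1/π₀ < Fk κ x) : 1 - π₀ + π₀^2/κ < x := by
  have hκ0 : (0:ℝ) < κ := by linarith
  have h1π : (1:ℝ) ≤ 1/π₀ := by rw [le_div_iff₀ hπ]; linarith
  have hxκ : ¬ x ≤ 1/κ := by
    intro h
    rw [Fk, if_pos h] at hF
    linarith
  rw [Fk, if_neg hxκ] at hF
  push_neg at hxκ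
  set a := 1 - 4 * (1 - x) / κ with ha_def
  have hx2 : 1 < x * κ := (div_lt_iff₀ hκ0).mp hxκ
  have ha0 : 0 ≤ a := by
    rw [ha_def, sub_nonneg, div_le_one hκ0]
    nlinarith [sq_nonneg (κ-2), mul_pos hκ0 hκ0]
  have ha1 : a ≤ 1 := by
    rw [ha_def]
    have : 0 ≤ 4 * (1 - x) / κ := div_nonneg (by linarith) (le_of_lt hκ0)
    linarith
  set s := Real.sqrt a with hs_def
  have hs0 : 0 ≤ s := Real.sqrt_nonneg a
  have hs1 : s ≤ 1 := by
    calc s ≤ Real.sqrt 1 := Real.sqrt_le_sqrt ha1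
      _ = 1 := Real.sqrt_one
  have hssq : s^2 = a := Real.sq_sqrt ha0
  have hd0 : 0 < 1 - s := by
    rcases lt_or_ge s 1 with h | h
    · linarith
    · exfalso
      have : s = 1 := le_antisymm hs1 h
      rw [this] at hF
      norm_num at hF
      linarith
  -- from hF : 1/π₀ < (2/κ)/(1-s), get 1-s < 2π₀/κ
  have hkey : 1 - s < 2*π₀/κ := by
    rw [lt_div_iff₀ hd0] at hF
    have h3 := mul_lt_mul_of_pos_left hF hπ
    have h4 : π₀ * (1/π₀ * (1-s)) = 1 - s := by field_simp
    rw [h4] at h3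
    calc 1 - s < π₀ * (2/κ) := h3
      _ = 2*π₀/κ := by ring
  have hc0 : 0 ≤ 1 - 2*π₀/κ := by
    rw [sub_nonneg, div_le_one hκ0]; linarith
  have hs_gt : 1 - 2*π₀/κ < s := by linarith
  have hsq_gt : (1 - 2*π₀/κ)^2 < a := by
    calc (1 - 2*π₀/κ)^2 < s^2 := by nlinarith
      _ = a := hssq
  rw [ha_def] at hsq_gt
  have h5 : κ * (1 - 2*π₀/κ)^2 < κ * (1 - 4*(1-x)/κ) := mul_lt_mul_of_pos_left hsq_gt hκ0
  have h6 : κ * (1 - 4*(1-x)/κ) = κ - 4*(1-x) := by field_simp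
  have h7 : κ * (1 - 2*π₀/κ)^2 = κ - 4*π₀ + 4*(π₀^2/κ) := by field_simp; ring
  linarith

lemma point {m : ℕ} (β : ℕ → ℝ) (hmono : ∀ i j : ℕ, i ≤ j → β i ≤ β j) (d U : ℝ)
    (hd : 0 ≤ d) {r : ℕ} (h1 : 1 ≤ r) (h2 : r ≤ m) (hU : U ≤ d * β r) :
    1/(r:ℝ) ≤ ∑ k ∈ Finset.Icc 1 m, W m k * (if U ≤ d * β k then 1 else 0) := by
  have step1 : ∑ k ∈ Finset.Icc r m, W m k
      ≤ ∑ k ∈ Finset.Icc r m, W m k * (if U ≤ d * β k then 1 else 0) := by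
    apply Finset.sum_le_sum
    intro k hk
    simp only [Finset.mem_Icc] at hk
    have : U ≤ d * β k :=
      le_trans hU (mul_le_mul_of_nonneg_left (hmono r k hk.1) hd)
    rw [if_pos this, mul_one]
  have step2 : ∑ k ∈ Finset.Icc r m, W m k * (if U ≤ d * β k then 1 else 0)
      ≤ ∑ k ∈ Finset.Icc 1 m, W m k * (if U ≤ d * β k then 1 else 0) := by
    apply Finset.sum_le_sum_of_subset_of_nonneg
    · intro k hk
      simp only [Finset.mem_Icc] at hk ⊢
      omega
    · intro k hk _
      simp only [Finset.mem_Icc] at hk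
      have := W_nonneg (m := m) hk.1
      split <;> simp <;> linarith
  rw [← W_sum h1 h2]
  exact le_trans step1 step2

lemma inner_nonneg {m : ℕ} (β : ℕ → ℝ) (d U : ℝ) :
    0 ≤ ∑ k ∈ Finset.Icc 1 m, W m k * (if U ≤ d * β k then 1 else 0) := by
  apply Finset.sum_nonneg
  intro k hk
  simp only [Finset.mem_Icc] at hk
  have := W_nonneg (m := m) hk.1
  split <;> simp <;> linarith

lemma frac_le {m : ℕ} (x : Fin m → ℝ) (Δ : ℕ → ℝ) (β : ℕ → ℝ)
    (hmono : ∀ i j : ℕ, i ≤ j → β i ≤ β j) (e : ℝ) (he : 0 ≤ e)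
    (hΔ0 : 0 ≤ Δ 0) (hΔmono : Monotone Δ) (hΔle : ∀ k, Δ k ≤ e * β k)
    (H₀ : Finset (Fin m)) (hcard : 1 ≤ (stepUp Δ x).card) :
    ((stepUp Δ x ∩ H₀).card : ℝ) / ((stepUp Δ x).card : ℝ)
      ≤ ∑ h ∈ H₀, ∑ k ∈ Finset.Icc 1 m, W m k * (if x h ≤ e * β k then 1 else 0) := by
  classical
  set S := stepUp Δ x with hS
  set n := S.card with hn
  have hnm : n ≤ m := card_stepUp_le Δ x
  have hn0 : (0:ℝ) < n := by exact_mod_cast hcard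
  have hfrac : ((S ∩ H₀).card : ℝ) / (n:ℝ) = ∑ _h ∈ S ∩ H₀, 1/(n:ℝ) := by
    rw [Finset.sum_const, nsmul_eq_mul]
    ring
  rw [hfrac]
  have hstep : ∀ h ∈ S ∩ H₀, 1/(n:ℝ)
      ≤ ∑ k ∈ Finset.Icc 1 m, W m k * (if x h ≤ e * β k then 1 else 0) := by
    intro h hh
    rw [Finset.mem_inter] at hh
    have hxh : x h ≤ Δ n := self_consistent Δ x hΔ0 hΔmono hh.1
    have hxh2 : x h ≤ e * β n := le_trans hxh (hΔle n)
    exact point β hmono e (x h) he hcard hnm hxh2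
  calc ∑ _h ∈ S ∩ H₀, 1/(n:ℝ)
      ≤ ∑ h ∈ S ∩ H₀, ∑ k ∈ Finset.Icc 1 m, W m k * (if x h ≤ e * β k then 1 else 0) :=
        Finset.sum_le_sum hstep
    _ ≤ ∑ h ∈ H₀, ∑ k ∈ Finset.Icc 1 m, W m k * (if x h ≤ e * β k then 1 else 0) := by
        apply Finset.sum_le_sum_of_subset_of_nonneg (Finset.inter_subset_right)
        intro h _ _
        exact inner_nonneg β e (x h)

lemma int_Z {Ω : Type*} [MeasurableSpace Ω] (μ : Measure Ω) [IsProbabilityMeasure μ]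
    (m : ℕ) (U : Ω → ℝ) (hU : Measurable U)
    (hnull : ∀ t : ℝ, 0 ≤ t → μ {ω | U ω ≤ t} ≤ ENNReal.ofReal t)
    (β : ℕ → ℝ) (hβn : ∀ r, 0 ≤ β r)
    (hS : ∑ k ∈ Finset.Icc 1 m, W m k * β k ≤ 1) (e : ℝ) (he : 0 ≤ e) :
    ∫⁻ ω, ENNReal.ofReal (∑ k ∈ Finset.Icc 1 m, W m k * (if U ω ≤ e * β k then 1 else 0)) ∂μ
      ≤ ENNReal.ofReal e := by
  classical
  have hmeas : ∀ k : ℕ, MeasurableSet {ω | U ω ≤ e * β k} :=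
    fun k => hU measurableSet_Iic
  have step1 : ∀ ω, ENNReal.ofReal (∑ k ∈ Finset.Icc 1 m, W m k * (if U ω ≤ e * β k then 1 else 0))
      = ∑ k ∈ Finset.Icc 1 m, ENNReal.ofReal (W m k) * (if U ω ≤ e * β k then 1 else 0) := by
    intro ω
    rw [ENNReal.ofReal_sum_of_nonneg]
    · apply Finset.sum_congr rfl
      intro k hk
      split
      · rw [mul_one, mul_one]
      · rw [mul_zero, mul_zero, ENNReal.ofReal_zero]
    · intro k hk
      simp only [Finset.mem_Icc] at hk
      have := W_nonneg (m := m) hk.1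
      split <;> simp <;> linarith
  rw [lintegral_congr step1, lintegral_finset_sum]
  swap
  · intro k hk
    exact (measurable_const.mul (Measurable.ite (hmeas k) measurable_const measurable_const))
  have step2 : ∀ k ∈ Finset.Icc 1 m,
      ∫⁻ ω, ENNReal.ofReal (W m k) * (if U ω ≤ e * β k then 1 else 0) ∂μ
        ≤ ENNReal.ofReal (W m k * (e * β k)) := by
    intro k hk
    simp only [Finset.mem_Icc] at hk
    rw [lintegral_const_mul _ (Measurable.ite (hmeas k) measurable_const measurable_const)]
    have hind : (fun ω => if U ω ≤ e * β k then (1:ENNReal) else 0)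
        = Set.indicator {ω | U ω ≤ e * β k} 1 := by
      ext ω
      by_cases h : U ω ≤ e * β k <;> simp [Set.indicator_apply, Set.mem_setOf_eq, h]
    rw [hind, lintegral_indicator_one (hmeas k)]
    have hμ : μ {ω | U ω ≤ e * β k} ≤ ENNReal.ofReal (e * β k) :=
      hnull _ (mul_nonneg he (hβn k))
    calc ENNReal.ofReal (W m k) * μ {ω | U ω ≤ e * β k}
        ≤ ENNReal.ofReal (W m k) * ENNReal.ofReal (e * β k) :=
          mul_le_mul_right hμ _
      _ = ENNReal.ofReal (W m k * (e * β k)) :=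
          (ENNReal.ofReal_mul (W_nonneg hk.1)).symm
  calc ∑ k ∈ Finset.Icc 1 m, ∫⁻ ω, ENNReal.ofReal (W m k) * (if U ω ≤ e * β k then 1 else 0) ∂μ
      ≤ ∑ k ∈ Finset.Icc 1 m, ENNReal.ofReal (W m k * (e * β k)) := Finset.sum_le_sum step2
    _ = ENNReal.ofReal (∑ k ∈ Finset.Icc 1 m, W m k * (e * β k)) := by
        rw [ENNReal.ofReal_sum_of_nonneg]
        intro k hk
        simp only [Finset.mem_Icc] at hk
        exact mul_nonneg (W_nonneg hk.1) (mul_nonneg he (hβn k))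
    _ ≤ ENNReal.ofReal e := by
        apply ENNReal.ofReal_le_ofReal
        have : ∑ k ∈ Finset.Icc 1 m, W m k * (e * β k)
            = e * ∑ k ∈ Finset.Icc 1 m, W m k * β k := by
          rw [Finset.mul_sum]
          apply Finset.sum_congr rfl
          intro k _; ring
        rw [this]
        calc e * ∑ k ∈ Finset.Icc 1 m, W m k * β k ≤ e * 1 :=
              mul_le_mul_of_nonneg_left hS he
          _ = e := mul_one e


set_option maxHeartbeats 2000000 in
/-- Theorem (two-stage adaptive procedure under unspecified dependence): with
`β(r) = ∫₀^r u dν(u)` for a probability measure `ν` on `(0,∞)`, first stage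
`R₀` the step-up procedure with threshold `α₀ β(i)/m`, and second stage `R` the
step-up procedure with data-dependent threshold `α₁ β(i) F_κ(|R₀|/m)/m`, one has
`FDR(R) ≤ α₁ + κ α₀` whenever `α₀ ≤ α₁` and `κ ≥ 2`. -/
theorem stmt18 {Ω : Type*} [MeasurableSpace Ω] (μ : Measure Ω) [IsProbabilityMeasure μ]
    (m : ℕ) (hm : 1 ≤ m) (p : Ω → Fin m → ℝ) (hp : Measurable p)
    (H₀ : Finset (Fin m))
    (hnull : ∀ h ∈ H₀, ∀ t ∈ Set.Icc (0 : ℝ) 1,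
      μ {ω | p ω h ≤ t} ≤ ENNReal.ofReal t)
    (ν : Measure ℝ) [IsProbabilityMeasure ν] (hν : ν (Set.Ioi (0 : ℝ))ᶜ = 0)
    (β : ℕ → ℝ) (hβ : ∀ r : ℕ, β r = ∫ u in Set.Ioc (0 : ℝ) (r : ℝ), u ∂ν)
    (κ α₀ α₁ : ℝ) (hκ : 2 ≤ κ)
    (hα₀ : α₀ ∈ Set.Ioo (0 : ℝ) 1) (hα₁ : α₁ ∈ Set.Ioo (0 : ℝ) 1) (h01 : α₀ ≤ α₁) :
    ∫⁻ ω, ENNReal.ofReal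
        ((((stepUp
              (fun i => α₁ * β i
                * Fk κ (((stepUp (fun j => α₀ * β j / m) (p ω)).card : ℝ) / m) / m)
              (p ω) ∩ H₀).card : ℝ))
          / ((stepUp
              (fun i => α₁ * β i
                * Fk κ (((stepUp (fun j => α₀ * β j / m) (p ω)).card : ℝ) / m) / m)
              (p ω)).card : ℝ)
          * (if 0 < (stepUp
              (fun i => α₁ * β i
                * Fk κ (((stepUp (fun j => α₀ * β j / m) (p ω)).card : ℝ) / m) / m)
              (p ω)).card then 1 else 0)) ∂μ
      ≤ ENNReal.ofReal (α₁ + κ * α₀) := by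
  classical
  have hmR : (0:ℝ) < m := by exact_mod_cast hm
  have hβmono : ∀ i j : ℕ, i ≤ j → β i ≤ β j := fun i j hij => beta_mono ν β hβ hij
  have hβ0 : β 0 = 0 := beta_zero ν β hβ
  have hβn : ∀ r, 0 ≤ β r := beta_nonneg ν β hβ
  have hSle : ∑ k ∈ Finset.Icc 1 m, W m k * β k ≤ 1 := S_le_one ν β hβ m
  set m₀ := H₀.card with hm₀def
  -- trivial case: no true nulls
  by_cases hH : m₀ = 0
  · have hH0 : H₀ = ∅ := Finset.card_eq_zero.mp hH
    have hzero : ∀ ω : Ω, ENNReal.ofReal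
        ((((stepUp (fun i => α₁ * β i
                * Fk κ (((stepUp (fun j => α₀ * β j / m) (p ω)).card : ℝ) / m) / m)
              (p ω) ∩ H₀).card : ℝ))
          / ((stepUp (fun i => α₁ * β i
                * Fk κ (((stepUp (fun j => α₀ * β j / m) (p ω)).card : ℝ) / m) / m)
              (p ω)).card : ℝ)
          * (if 0 < (stepUp (fun i => α₁ * β i
                * Fk κ (((stepUp (fun j => α₀ * β j / m) (p ω)).card : ℝ) / m) / m)
              (p ω)).card then 1 else 0)) = 0 := by
      intro ω
      rw [hH0]
      simp
    rw [lintegral_congr hzero]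
    simp
  -- main case
  have hm₀1 : 1 ≤ m₀ := by omega
  have hm₀R : (0:ℝ) < m₀ := by exact_mod_cast hm₀1
  set π₀ : ℝ := (m₀:ℝ)/m with hπ₀def
  have hπ0 : 0 < π₀ := by positivity
  have hm₀m : m₀ ≤ m := by
    calc m₀ ≤ Fintype.card (Fin m) := Finset.card_le_univ H₀
      _ = m := by simp
  have hπ1 : π₀ ≤ 1 := by
    rw [hπ₀def, div_le_one hmR]
    exact_mod_cast hm₀m
  set e₁ : ℝ := α₁/(π₀*m) with he₁def
  set e₀ : ℝ := α₀/m with he₀def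
  have he₁ : 0 ≤ e₁ := by
    apply div_nonneg (le_of_lt hα₁.1) (le_of_lt (by positivity))
  have he₀ : 0 ≤ e₀ := div_nonneg (le_of_lt hα₀.1) (le_of_lt hmR)
  have hcA : 0 ≤ κ/π₀ := div_nonneg (by linarith) (le_of_lt hπ0)
  -- the inner majorant
  set Z : ℝ → Ω → Fin m → ℝ :=
    fun e ω h => ∑ k ∈ Finset.Icc 1 m, W m k * (if p ω h ≤ e * β k then 1 else 0) with hZdef
  -- pointwise bound
  have hpoint : ∀ ω : Ω, ENNReal.ofReal
        ((((stepUp (fun i => α₁ * β i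
                * Fk κ (((stepUp (fun j => α₀ * β j / m) (p ω)).card : ℝ) / m) / m)
              (p ω) ∩ H₀).card : ℝ))
          / ((stepUp (fun i => α₁ * β i
                * Fk κ (((stepUp (fun j => α₀ * β j / m) (p ω)).card : ℝ) / m) / m)
              (p ω)).card : ℝ)
          * (if 0 < (stepUp (fun i => α₁ * β i
                * Fk κ (((stepUp (fun j => α₀ * β j / m) (p ω)).card : ℝ) / m) / m)
              (p ω)).card then 1 else 0))
      ≤ (∑ h ∈ H₀, ENNReal.ofReal (Z e₁ ω h))
        + ENNReal.ofReal (κ/π₀) * ∑ h ∈ H₀, ENNReal.ofReal (Z e₀ ω h) := by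
    intro ω
    set r0 := (stepUp (fun j => α₀ * β j / m) (p ω)).card with hr0def
    set F := Fk κ ((r0:ℝ)/m) with hFdef
    set R := stepUp (fun i => α₁ * β i * F / m) (p ω) with hRdef
    have hr0m : r0 ≤ m := card_stepUp_le _ _
    have hx1 : (r0:ℝ)/m ≤ 1 := by
      rw [div_le_one hmR]; exact_mod_cast hr0m
    have hF0 : 0 ≤ F := Fk_nonneg hκ hx1
    have hZ1nn : 0 ≤ ∑ h ∈ H₀, Z e₁ ω h :=
      Finset.sum_nonneg fun h _ => inner_nonneg β e₁ (p ω h)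
    have hZ0nn : 0 ≤ ∑ h ∈ H₀, Z e₀ ω h :=
      Finset.sum_nonneg fun h _ => inner_nonneg β e₀ (p ω h)
    have hreal : ((R ∩ H₀).card : ℝ) / (R.card : ℝ)
          * (if 0 < R.card then 1 else 0)
        ≤ (∑ h ∈ H₀, Z e₁ ω h) + (κ/π₀) * ∑ h ∈ H₀, Z e₀ ω h := by
      by_cases hA : F ≤ 1/π₀
      · -- A-event: use self-consistency with e₁
        by_cases hR0 : 0 < R.card
        · rw [if_pos hR0, mul_one]
          have hfr := frac_le (p ω) (fun i => α₁ * β i * F / m) β hβmono e₁ he₁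
            (by simp [hβ0])
            (fun i j hij => by
              have hb := hβmono i j hij
              have h1 : 0 ≤ α₁ * F / m :=
                div_nonneg (mul_nonneg (le_of_lt hα₁.1) hF0) (le_of_lt hmR)
              calc α₁ * β i * F / m = (α₁ * F / m) * β i := by ring
                _ ≤ (α₁ * F / m) * β j := mul_le_mul_of_nonneg_left hb h1
                _ = α₁ * β j * F / m := by ring)
            (fun k => by
              show α₁ * β k * F / m ≤ e₁ * β k
              have h2 : α₁ * β k * F / m = (α₁ * β k / m) * F := by ring
              have h3 : e₁ * β k = (α₁ * β k / m) * (1/π₀) := by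
                rw [he₁def]
                field_simp
              rw [h2, h3]
              apply mul_le_mul_of_nonneg_left hA
                (div_nonneg (mul_nonneg (le_of_lt hα₁.1) (hβn k)) (le_of_lt hmR)))
            H₀ hR0
          calc ((R ∩ H₀).card : ℝ) / (R.card : ℝ) ≤ ∑ h ∈ H₀, Z e₁ ω h := hfr
            _ ≤ (∑ h ∈ H₀, Z e₁ ω h) + (κ/π₀) * ∑ h ∈ H₀, Z e₀ ω h := by
                have : 0 ≤ (κ/π₀) * ∑ h ∈ H₀, Z e₀ ω h := mul_nonneg hcA hZ0nn
                linarith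
        · rw [if_neg hR0, mul_zero]
          have : 0 ≤ (κ/π₀) * ∑ h ∈ H₀, Z e₀ ω h := mul_nonneg hcA hZ0nn
          linarith
      · -- complement: Markov-type bound via first stage
        push_neg at hA
        have ht : 1 - π₀ + π₀^2/κ < (r0:ℝ)/m := Fk_gt hκ hπ0 hπ1 hx1 hA
        have htpos : 0 < 1 - π₀ + π₀^2/κ := by
          have h4 : 0 < π₀^2/κ := by positivity
          linarith
        have hr0pos : (0:ℝ) < r0 := by
          have hq : 0 < (r0:ℝ)/m := lt_trans htpos ht
          have := mul_pos hq hmR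
          rwa [div_mul_cancel₀ _ (ne_of_gt hmR)] at this
        have hr0pos' : 0 < r0 := by exact_mod_cast hr0pos
        have hF1 : (1:ℝ) ≤ F := by
          have : (1:ℝ) ≤ 1/π₀ := by rw [le_div_iff₀ hπ0]; linarith
          linarith
        have hsub : stepUp (fun j => α₀ * β j / m) (p ω) ⊆ R := by
          apply stepUp_mono _ _ _ (by simp [hβ0]) (by simp [hβ0])
            (div_nonneg (mul_nonneg (le_of_lt hα₀.1) (hβn 1)) (le_of_lt hmR))
          intro i _
          show α₀ * β i / m ≤ α₁ * β i * F / m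
          have h5 : α₀ * β i ≤ α₁ * β i * F := by
            have h6 : α₀ * β i ≤ α₁ * β i :=
              mul_le_mul_of_nonneg_right h01 (hβn i)
            have h7 : α₁ * β i = α₁ * β i * 1 := by ring
            have h8 : α₁ * β i * 1 ≤ α₁ * β i * F :=
              mul_le_mul_of_nonneg_left hF1 (mul_nonneg (le_of_lt hα₁.1) (hβn i))
            linarith
          exact div_le_div_of_nonneg_right h5 hmR.le
        have hRcard : r0 ≤ R.card := Finset.card_le_card hsub
        have hRpos : 0 < R.card := lt_of_lt_of_le hr0pos' hRcard
        rw [if_pos hRpos, mul_one]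
        have hRcardR : (r0:ℝ) ≤ (R.card:ℝ) := by exact_mod_cast hRcard
        have hRposR : (0:ℝ) < (R.card:ℝ) := by exact_mod_cast hRpos
        -- card(R₀ ∩ H₀) ≥ r0 - (m - m₀)
        have hcap : (r0:ℝ) - (m - m₀)
            ≤ ((stepUp (fun j => α₀ * β j / m) (p ω) ∩ H₀).card : ℝ) := by
          have h6 := Finset.card_inter_add_card_sdiff
            (stepUp (fun j => α₀ * β j / m) (p ω)) H₀
          have h7 : (stepUp (fun j => α₀ * β j / m) (p ω) \ H₀).card ≤ m - m₀ := by
            have hsub2 : stepUp (fun j => α₀ * β j / m) (p ω) \ H₀ ⊆ Finset.univ \ H₀ :=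
              Finset.sdiff_subset_sdiff (Finset.subset_univ _) (le_refl _)
            have := Finset.card_le_card hsub2
            rwa [Finset.card_sdiff_of_subset (Finset.subset_univ _), Finset.card_univ,
              Fintype.card_fin] at this
          have : r0 ≤ (stepUp (fun j => α₀ * β j / m) (p ω) ∩ H₀).card + (m - m₀) := by omega
          have h8 : (r0:ℝ) ≤ ((stepUp (fun j => α₀ * β j / m) (p ω) ∩ H₀).card : ℝ)
              + ((m:ℝ) - (m₀:ℝ)) := by
            have h8' : ((m - m₀:ℕ):ℝ) = (m:ℝ) - (m₀:ℝ) := by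
              have : m₀ ≤ m := hm₀m
              push_cast [this]; ring
            rw [← h8']
            exact_mod_cast this
          linarith
        -- key: m₀ ≤ (κ/π₀) * card(R₀ ∩ H₀)
        have hkey : (m₀:ℝ) ≤ (κ/π₀) * ((stepUp (fun j => α₀ * β j / m) (p ω) ∩ H₀).card : ℝ) := by
          have h9 : (m:ℝ) * (π₀^2/κ) < ((stepUp (fun j => α₀ * β j / m) (p ω) ∩ H₀).card : ℝ) := by
            have h12 : (m:ℝ) * π₀ = m₀ := by rw [hπ₀def]; field_simp
            have h10 : (m:ℝ) - (m₀:ℝ) + (m:ℝ) * (π₀^2/κ) < (r0:ℝ) := by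
              have hq := (lt_div_iff₀ hmR).mp ht
              have hexp : (1 - π₀ + π₀^2/κ) * (m:ℝ)
                  = (m:ℝ) - (m:ℝ)*π₀ + (m:ℝ)*(π₀^2/κ) := by ring
              rw [hexp] at hq
              linarith
            linarith [hcap]
          have h13 : (κ/π₀) * ((m:ℝ) * (π₀^2/κ)) = m₀ := by
            rw [hπ₀def]; field_simp
          calc (m₀:ℝ) = (κ/π₀) * ((m:ℝ) * (π₀^2/κ)) := h13.symm
            _ ≤ (κ/π₀) * ((stepUp (fun j => α₀ * β j / m) (p ω) ∩ H₀).card : ℝ) := by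
                apply mul_le_mul_of_nonneg_left (le_of_lt h9) hcA
        have hfr0 := frac_le (p ω) (fun j => α₀ * β j / m) β hβmono e₀ he₀
          (by simp [hβ0])
          (fun i j hij => by
            have := hβmono i j hij
            have h1 : 0 ≤ α₀ / m := by positivity
            calc α₀ * β i / m = (α₀/m) * β i := by ring
              _ ≤ (α₀/m) * β j := mul_le_mul_of_nonneg_left this h1
              _ = α₀ * β j / m := by ring)
          (fun k => le_of_eq (by rw [he₀def]; ring))
          H₀ hr0pos'
        have hcapR : ((R ∩ H₀).card : ℝ) ≤ (m₀:ℝ) := by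
          exact_mod_cast Finset.card_le_card (Finset.inter_subset_right (s₁ := R) (s₂ := H₀))
        calc ((R ∩ H₀).card : ℝ) / (R.card : ℝ) ≤ (m₀:ℝ) / (R.card:ℝ) :=
              div_le_div_of_nonneg_right hcapR hRposR.le
          _ ≤ (m₀:ℝ) / (r0:ℝ) := by
              apply div_le_div_of_nonneg_left (by positivity) hr0pos hRcardR
          _ ≤ ((κ/π₀) * ((stepUp (fun j => α₀ * β j / m) (p ω) ∩ H₀).card : ℝ)) / (r0:ℝ) := by
              apply div_le_div_of_nonneg_right hkey hr0pos.le
          _ = (κ/π₀) * (((stepUp (fun j => α₀ * β j / m) (p ω) ∩ H₀).card : ℝ) / (r0:ℝ)) := by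
              ring
          _ ≤ (κ/π₀) * ∑ h ∈ H₀, Z e₀ ω h := by
              apply mul_le_mul_of_nonneg_left hfr0 hcA
          _ ≤ (∑ h ∈ H₀, Z e₁ ω h) + (κ/π₀) * ∑ h ∈ H₀, Z e₀ ω h := by linarith
    -- move to ENNReal
    calc ENNReal.ofReal (((R ∩ H₀).card : ℝ) / (R.card : ℝ) * (if 0 < R.card then 1 else 0))
        ≤ ENNReal.ofReal ((∑ h ∈ H₀, Z e₁ ω h) + (κ/π₀) * ∑ h ∈ H₀, Z e₀ ω h) :=
          ENNReal.ofReal_le_ofReal hreal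
      _ ≤ ENNReal.ofReal (∑ h ∈ H₀, Z e₁ ω h)
            + ENNReal.ofReal ((κ/π₀) * ∑ h ∈ H₀, Z e₀ ω h) := ENNReal.ofReal_add_le
      _ = (∑ h ∈ H₀, ENNReal.ofReal (Z e₁ ω h))
            + ENNReal.ofReal (κ/π₀) * ∑ h ∈ H₀, ENNReal.ofReal (Z e₀ ω h) := by
          rw [ENNReal.ofReal_mul hcA]
          rw [ENNReal.ofReal_sum_of_nonneg (fun h _ => inner_nonneg β e₁ (p ω h)),
            ENNReal.ofReal_sum_of_nonneg (fun h _ => inner_nonneg β e₀ (p ω h))]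
  -- integration
  have hnull' : ∀ h ∈ H₀, ∀ t : ℝ, 0 ≤ t → μ {ω | p ω h ≤ t} ≤ ENNReal.ofReal t := by
    intro h hh t ht
    by_cases h1 : t ≤ 1
    · exact hnull h hh t ⟨ht, h1⟩
    · push_neg at h1
      calc μ {ω | p ω h ≤ t} ≤ 1 := prob_le_one
        _ = ENNReal.ofReal 1 := by simp
        _ ≤ ENNReal.ofReal t := ENNReal.ofReal_le_ofReal (le_of_lt h1)
  have hmeasp : ∀ h : Fin m, Measurable fun ω => p ω h :=
    fun h => (measurable_pi_apply h).comp hp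
  have hmeasZ : ∀ (e : ℝ) (h : Fin m), Measurable fun ω => ENNReal.ofReal (Z e ω h) := by
    intro e h
    apply ENNReal.measurable_ofReal.comp
    apply Finset.measurable_sum
    intro k _
    exact (Measurable.ite ((hmeasp h) measurableSet_Iic) measurable_const
      measurable_const).const_mul (W m k)
  have hmeasS1 : Measurable fun ω => ∑ h ∈ H₀, ENNReal.ofReal (Z e₁ ω h) :=
    Finset.measurable_sum _ (fun h _ => hmeasZ e₁ h)
  have hmeasS0 : Measurable fun ω => ∑ h ∈ H₀, ENNReal.ofReal (Z e₀ ω h) :=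
    Finset.measurable_sum _ (fun h _ => hmeasZ e₀ h)
  have hint : ∀ (e : ℝ), 0 ≤ e → ∀ h ∈ H₀,
      ∫⁻ ω, ENNReal.ofReal (Z e ω h) ∂μ ≤ ENNReal.ofReal e := by
    intro e he h hh
    exact int_Z μ m (fun ω => p ω h) (hmeasp h) (fun t ht => hnull' h hh t ht) β hβn hSle e he
  calc ∫⁻ ω, ENNReal.ofReal
        ((((stepUp (fun i => α₁ * β i
                * Fk κ (((stepUp (fun j => α₀ * β j / m) (p ω)).card : ℝ) / m) / m)
              (p ω) ∩ H₀).card : ℝ))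
          / ((stepUp (fun i => α₁ * β i
                * Fk κ (((stepUp (fun j => α₀ * β j / m) (p ω)).card : ℝ) / m) / m)
              (p ω)).card : ℝ)
          * (if 0 < (stepUp (fun i => α₁ * β i
                * Fk κ (((stepUp (fun j => α₀ * β j / m) (p ω)).card : ℝ) / m) / m)
              (p ω)).card then 1 else 0)) ∂μ
      ≤ ∫⁻ ω, ((∑ h ∈ H₀, ENNReal.ofReal (Z e₁ ω h))
          + ENNReal.ofReal (κ/π₀) * ∑ h ∈ H₀, ENNReal.ofReal (Z e₀ ω h)) ∂μ :=
        lintegral_mono hpoint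
    _ = (∫⁻ ω, ∑ h ∈ H₀, ENNReal.ofReal (Z e₁ ω h) ∂μ)
          + ENNReal.ofReal (κ/π₀) * ∫⁻ ω, ∑ h ∈ H₀, ENNReal.ofReal (Z e₀ ω h) ∂μ := by
        rw [lintegral_add_left hmeasS1, lintegral_const_mul _ hmeasS0]
    _ = (∑ h ∈ H₀, ∫⁻ ω, ENNReal.ofReal (Z e₁ ω h) ∂μ)
          + ENNReal.ofReal (κ/π₀) * ∑ h ∈ H₀, ∫⁻ ω, ENNReal.ofReal (Z e₀ ω h) ∂μ := by
        rw [lintegral_finset_sum _ (fun h _ => hmeasZ e₁ h),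
          lintegral_finset_sum _ (fun h _ => hmeasZ e₀ h)]
    _ ≤ (∑ _h ∈ H₀, ENNReal.ofReal e₁)
          + ENNReal.ofReal (κ/π₀) * ∑ _h ∈ H₀, ENNReal.ofReal e₀ := by
        apply add_le_add
        · exact Finset.sum_le_sum (hint e₁ he₁)
        · exact mul_le_mul_right (Finset.sum_le_sum (hint e₀ he₀)) _
    _ = (m₀:ENNReal) * ENNReal.ofReal e₁
          + ENNReal.ofReal (κ/π₀) * ((m₀:ENNReal) * ENNReal.ofReal e₀) := by
        rw [Finset.sum_const, Finset.sum_const, ← hm₀def, nsmul_eq_mul, nsmul_eq_mul]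
    _ = ENNReal.ofReal ((m₀:ℝ) * e₁) + ENNReal.ofReal ((κ/π₀) * ((m₀:ℝ) * e₀)) := by
        rw [ENNReal.ofReal_mul hcA, ENNReal.ofReal_mul (by positivity : (0:ℝ) ≤ (m₀:ℝ)),
          ENNReal.ofReal_mul (by positivity : (0:ℝ) ≤ (m₀:ℝ)), ENNReal.ofReal_natCast]
    _ = ENNReal.ofReal α₁ + ENNReal.ofReal (κ * α₀) := by
        have h1 : (m₀:ℝ) * e₁ = α₁ := by
          rw [he₁def, hπ₀def]; field_simp
        have h2 : (κ/π₀) * ((m₀:ℝ) * e₀) = κ * α₀ := by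
          rw [he₀def, hπ₀def]; field_simp
        rw [h1, h2]
    _ = ENNReal.ofReal (α₁ + κ * α₀) := by
        rw [ENNReal.ofReal_add (le_of_lt hα₁.1) (by nlinarith [hα₀.1] : (0:ℝ) ≤ κ * α₀)]
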